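/- arXiv:2503.17255 — 2 statements merged into one kernel-verified Lean document; each statement's English description precedes it below -/
import Mathlib

section
/- Let d ≥ 1 and let (k_{i,n})_{i∈{1,…,d}, n≥1} be positive reals with k_{i,n}/n → x_i for each i, where x = (x_1,…,x_d) is a probability vector, and assume in addition that log(min(k_{i,n}, 1))/n → 0 for every i. For each n let Z_{1,n},…,Z_{d,n} be independent with Z_{i,n} ∼ Gamma(k_{i,n}, 1), and set Y_n = (Z_{1,n}/Σ_{j} Z_{j,n}, …, Z_{d,n}/Σ_{j} Z_{j,n}) ∈ ℝ^d. Define I : ℝ^d → [0,∞] by I(y) = KL(x‖y) if y is a probability vector on {1,…,d}, and I(y) = ∞ otherwise. Then for every open set G ⊆ ℝ^d, liminf_{n→∞} (1/n)·log P(Y_n ∈ G) ≥ −inf_{y∈G} I(y). -/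
open MeasureTheory ProbabilityTheory Filter
open scoped ENNReal NNReal Classical

/-- Kullback–Leibler divergence between two vectors on `{1,…,d}`, valued in
`[0, ∞]`: `Σ_{i : x i > 0} x i · log (x i / y i)`, equal to `∞` when
`y i = 0 < x i` for some `i`. -/
noncomputable def klVec {d : ℕ} (x y : Fin d → ℝ) : ℝ≥0∞ :=
  if ∀ i, 0 < x i → 0 < y i then
    ENNReal.ofReal (∑ i, if 0 < x i then x i * Real.log (x i / y i) else 0)
  else ⊤

/-- Rate function of the Dirichlet LDP: `I(y) = KL(x‖y)` if `y` is a probability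
vector, `∞` otherwise. -/
noncomputable def dirRate {d : ℕ} (x y : Fin d → ℝ) : ℝ≥0∞ :=
  if (∀ i, 0 ≤ y i) ∧ (∑ i, y i) = 1 then klVec x y else ⊤



section auxLDP
open Filter Real Set MeasureTheory ProbabilityTheory

-- monotonicity of t log t - t on [1,∞)
lemma auxMonoTlogT : MonotoneOn (fun t : ℝ => t * Real.log t - t) (Set.Ici 1) := by
  have hderiv : ∀ t ∈ interior (Set.Ici (1:ℝ)), HasDerivAt (fun t : ℝ => t * Real.log t - t) (Real.log t) t := by
    intro t ht
    rw [interior_Ici] at ht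
    have h1 : HasDerivAt (fun t : ℝ => t * Real.log t) (Real.log t + 1) t :=
      Real.hasDerivAt_mul_log (ne_of_gt (lt_of_lt_of_le one_pos ht.le))
    have h2 := h1.sub (hasDerivAt_id t)
    simp only [add_sub_cancel_right] at h2
    exact h2
  apply monotoneOn_of_deriv_nonneg (convex_Ici 1)
  · apply ContinuousOn.sub (ContinuousOn.mul continuousOn_id ?_) continuousOn_id
    intro t ht
    exact (Real.continuousAt_log (by exact ne_of_gt (lt_of_lt_of_le one_pos ht))).continuousWithinAt
  · intro t ht
    exact (hderiv t ht).differentiableAt.differentiableWithinAt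
  · intro t ht
    rw [(hderiv t ht).deriv]
    rw [interior_Ici] at ht
    exact Real.log_nonneg ht.le

lemma auxGammaLeOne {k : ℝ} (h1 : 1 ≤ k) (h2 : k ≤ 2) : Real.Gamma k ≤ 1 := by
  have hseg : k ∈ segment ℝ (1:ℝ) 2 := by
    rw [segment_eq_Icc (by norm_num : (1:ℝ) ≤ 2)]
    exact ⟨h1, h2⟩
  have := Real.convexOn_Gamma.le_on_segment (Set.mem_Ioi.2 one_pos)
    (Set.mem_Ioi.2 two_pos) hseg
  simpa [Real.Gamma_one, Real.Gamma_two] using this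

lemma auxFactorialBound (m : ℕ) (hm : 1 ≤ m) :
    (m.factorial : ℝ) ≤ 2 * Real.sqrt (2 * m) * (m / Real.exp 1) ^ m := by
  have hpos : 0 < Real.sqrt (2 * m) * ((m : ℝ) / Real.exp 1) ^ m := by
    apply mul_pos
    · apply Real.sqrt_pos.2; positivity
    · apply pow_pos; positivity
  have hst : Stirling.stirlingSeq m ≤ Real.exp 1 / Real.sqrt 2 := by
    have h := Stirling.stirlingSeq'_antitone (Nat.zero_le (m - 1))
    simp only [Function.comp_apply, Nat.succ_eq_add_one, Nat.zero_add] at h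
    rw [Nat.sub_add_cancel hm] at h
    simpa [Stirling.stirlingSeq_one] using h
  have he : Real.exp 1 / Real.sqrt 2 ≤ 2 := by
    rw [div_le_iff₀ (by positivity)]
    have h2 : (1.4 : ℝ) ≤ Real.sqrt 2 := by
      rw [show (1.4:ℝ) = Real.sqrt (1.4^2) by rw [Real.sqrt_sq]; norm_num]
      apply Real.sqrt_le_sqrt; norm_num
    nlinarith [Real.exp_one_lt_d9]
  have hdef : (m.factorial : ℝ) = Stirling.stirlingSeq m * (Real.sqrt (2 * m) * ((m:ℝ) / Real.exp 1) ^ m) := by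
    rw [Stirling.stirlingSeq]
    field_simp
  rw [hdef, mul_assoc]
  exact mul_le_mul_of_nonneg_right (hst.trans he) hpos.le

lemma auxLogGammaBound {k : ℝ} (hk : 0 < k) :
    Real.log (Real.Gamma k) ≤ k * Real.log k - k + 2 + |Real.log k| := by
  rcases le_or_gt k 1 with h1 | h1
  · -- small k : Γ k ≤ 1/k
    have hg1 : Real.Gamma (k + 1) ≤ 1 := auxGammaLeOne (by linarith) (by linarith)
    have hval : Real.Gamma (k + 1) = k * Real.Gamma k := Real.Gamma_add_one hk.ne'
    have hGpos : 0 < Real.Gamma k := Real.Gamma_pos_of_pos hk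
    have hle : Real.Gamma k ≤ 1 / k := by
      rw [hval] at hg1
      rw [le_div_iff₀ hk]; linarith [hg1]
    have hlog : Real.log (Real.Gamma k) ≤ - Real.log k := by
      calc Real.log (Real.Gamma k) ≤ Real.log (1 / k) := Real.log_le_log hGpos hle
        _ = - Real.log k := by rw [one_div, Real.log_inv]
    have habs : |Real.log k| = - Real.log k := abs_of_nonpos (Real.log_nonpos hk.le h1)
    -- k log k ≥ k - 1
    have hklk : k - 1 ≤ k * Real.log k := by
      have : 1 - 1 / k ≤ Real.log k := by
        have := Real.log_le_sub_one_of_pos (show (0:ℝ) < 1/k by positivity)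
        rw [Real.log_div one_ne_zero hk.ne', Real.log_one] at this
        linarith
      have h2 := mul_le_mul_of_nonneg_left this hk.le
      rw [mul_sub, mul_one, mul_one_div, div_self hk.ne'] at h2
      linarith
    rw [habs]; linarith
  rcases le_or_gt k 2 with h2 | h2
  · have hle : Real.Gamma k ≤ 1 := auxGammaLeOne h1.le h2
    have hlog : Real.log (Real.Gamma k) ≤ 0 := Real.log_nonpos (Real.Gamma_pos_of_pos hk).le hle
    have h3 : 0 ≤ Real.log k := Real.log_nonneg h1.le
    have h4 : 0 ≤ k * Real.log k := by positivity
    have := abs_nonneg (Real.log k)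
    linarith
  · -- k > 2
    set m : ℕ := ⌊k⌋₊ with hm
    have hm2 : 2 ≤ m := Nat.le_floor (by exact_mod_cast h2.le)
    have hmk : (m : ℝ) ≤ k := Nat.floor_le hk.le
    have hkm1 : k ≤ (m : ℝ) + 1 := (Nat.lt_floor_add_one k).le
    have hm1R : (1:ℝ) ≤ (m:ℝ) := by exact_mod_cast hm2.trans' one_le_two
    have hmpos : (0:ℝ) < m := by linarith
    -- Gamma k ≤ m !
    have hGm : Real.Gamma k ≤ (m.factorial : ℝ) := by
      have hseg : k ∈ segment ℝ ((m:ℝ)) ((m:ℝ)+1) := by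
        rw [segment_eq_Icc (by linarith : (m:ℝ) ≤ (m:ℝ)+1)]
        exact ⟨hmk, hkm1⟩
      have hmax := Real.convexOn_Gamma.le_on_segment (Set.mem_Ioi.2 hmpos)
        (Set.mem_Ioi.2 (by linarith)) hseg
      have hΓm1 : Real.Gamma ((m:ℝ)+1) = (m.factorial : ℝ) := by
        exact_mod_cast Real.Gamma_nat_eq_factorial m
      have hmono : Real.Gamma ((m:ℝ)) ≤ Real.Gamma ((m:ℝ)+1) := by
        rw [Real.Gamma_add_one (by positivity)]
        nlinarith [Real.Gamma_pos_of_pos hmpos]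
      rw [hΓm1] at hmax hmono
      rw [max_eq_right hmono] at hmax
      exact hmax
    have hfb := auxFactorialBound m (by omega)
    have hlogk0 : 0 ≤ Real.log k := Real.log_nonneg (by linarith)
    have hlog2 : Real.log 2 ≤ 1 := by
      have := Real.log_le_sub_one_of_pos (show (0:ℝ) < 2 by norm_num); linarith
    have hsq : Real.sqrt (2 * m) = Real.sqrt 2 * Real.sqrt m := Real.sqrt_mul (by norm_num) _
    calc Real.log (Real.Gamma k) ≤ Real.log (m.factorial : ℝ) :=
          Real.log_le_log (Real.Gamma_pos_of_pos hk) hGm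
      _ ≤ Real.log (2 * Real.sqrt (2 * m) * ((m:ℝ) / Real.exp 1) ^ m) :=
          Real.log_le_log (by positivity) hfb
      _ = Real.log 2 + (Real.log 2 / 2 + Real.log m / 2) + m * (Real.log m - 1) := by
          rw [Real.log_mul (by positivity) (by positivity)]
          rw [Real.log_mul (by norm_num) (by positivity)]
          rw [hsq]
          rw [Real.log_mul (by positivity) (by positivity)]
          rw [Real.log_sqrt (by norm_num), Real.log_sqrt (by positivity)]
          rw [Real.log_pow]
          rw [Real.log_div (by positivity) (Real.exp_pos 1).ne']
          rw [Real.log_exp]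
      _ ≤ k * Real.log k - k + 2 + |Real.log k| := by
          have hmono := auxMonoTlogT (Set.mem_Ici.2 hm1R) (Set.mem_Ici.2 (hm1R.trans hmk)) hmk
          simp only at hmono
          have hlogm : Real.log m ≤ Real.log k := Real.log_le_log hmpos hmk
          rw [abs_of_nonneg hlogk0]
          nlinarith [hmono, hlogm, hlog2, hlogk0]

-- u * log u tendsto
lemma auxTendstoMulLog {x : ℝ} (hx : 0 ≤ x) {u : ℕ → ℝ} (hu : ∀ᶠ n in atTop, 0 < u n)
    (h : Tendsto u atTop (nhds x)) :
    Tendsto (fun n => u n * Real.log (u n)) atTop (nhds (x * Real.log x)) := by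
  rcases hx.lt_or_eq with hx' | hx'
  · have hlog : Tendsto (fun n => Real.log (u n)) atTop (nhds (Real.log x)) :=
      ((Real.continuousAt_log hx'.ne').tendsto).comp h
    exact h.mul hlog
  · rw [← hx']
    rw [← hx'] at h
    simp only [Real.log_zero, zero_mul]
    -- squeeze : -(2 * sqrt (u n)) ≤ u n * log (u n) ≤ 0 eventually
    have hsq : Tendsto (fun n => -(2 * Real.sqrt (u n))) atTop (nhds 0) := by
      have : Tendsto (fun n => Real.sqrt (u n)) atTop (nhds 0) := by
        have := (Real.continuous_sqrt.tendsto 0).comp h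
        simpa [Function.comp_def] using this
      have := this.const_mul 2
      simpa using this.neg
    have hle : ∀ᶠ n in atTop, u n ≤ 1 := h.eventually_le_const one_pos
    apply tendsto_of_tendsto_of_tendsto_of_le_of_le' hsq tendsto_const_nhds
    · filter_upwards [hu, hle] with n hn hn1
      -- -(2 sqrt u) ≤ u log u
      have hsqpos : 0 < Real.sqrt (u n) := Real.sqrt_pos.2 hn
      have hlog : - Real.log (u n) ≤ 2 / Real.sqrt (u n) := by
        have h1 : Real.log (u n) = 2 * Real.log (Real.sqrt (u n)) := by
          rw [Real.log_sqrt hn.le]; ring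
        have h2 : Real.log (Real.sqrt (u n)) ≥ -(1 / Real.sqrt (u n) - 1) := by
          have := Real.log_le_sub_one_of_pos (show 0 < (Real.sqrt (u n))⁻¹ by positivity)
          rw [Real.log_inv] at this
          rw [ge_iff_le, neg_le]
          rw [one_div]
          linarith
        rw [h1]
        have : -(2 * Real.log (Real.sqrt (u n))) ≤ 2 * (1 / Real.sqrt (u n) - 1) := by linarith
        calc -(2 * Real.log (Real.sqrt (u n))) ≤ 2 * (1 / Real.sqrt (u n) - 1) := this
          _ ≤ 2 / Real.sqrt (u n) := by
              rw [mul_sub, mul_one_div]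
              have : (0:ℝ) ≤ 2 := by norm_num
              linarith
      have hmul := mul_le_mul_of_nonneg_left hlog hn.le
      have h3 : u n * (2 / Real.sqrt (u n)) = 2 * Real.sqrt (u n) := by
        field_simp
        nlinarith [Real.sq_sqrt hn.le]
      rw [h3] at hmul
      linarith
    · filter_upwards [hu, hle] with n hn hn1
      exact mul_nonpos_of_nonneg_of_nonpos hn.le (Real.log_nonpos hn.le hn1)

-- log n / n -> 0
lemma auxLogDivTendsto : Tendsto (fun n : ℕ => Real.log n / n) atTop (nhds 0) := by
  have h := Real.tendsto_pow_log_div_mul_add_atTop 1 0 1 one_ne_zero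
  simp only [pow_one, one_mul, add_zero] at h
  exact h.comp tendsto_natCast_atTop_atTop

lemma auxAbsLogDivTendsto {x : ℝ} (hx : 0 ≤ x) {k : ℕ → ℝ} (hk : ∀ n, 0 < k n)
    (hkx : Tendsto (fun n : ℕ => k n / n) atTop (nhds x))
    (hklog : Tendsto (fun n : ℕ => Real.log (min (k n) 1) / n) atTop (nhds 0)) :
    Tendsto (fun n : ℕ => |Real.log (k n)| / n) atTop (nhds 0) := by
  have hmax : Tendsto (fun n : ℕ => Real.log (max (k n) 1) / n) atTop (nhds 0) := by
    apply tendsto_of_tendsto_of_tendsto_of_le_of_le' tendsto_const_nhds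
      (h := fun n : ℕ => (Real.log (x + 1) + Real.log n) / n)
    · have h1 : Tendsto (fun n : ℕ => Real.log (x+1) / n) atTop (nhds 0) :=
        tendsto_const_nhds.div_atTop tendsto_natCast_atTop_atTop
      have := h1.add auxLogDivTendsto
      simpa [add_div] using this
    · filter_upwards [eventually_ge_atTop 1] with n hn
      have hnpos : (0:ℝ) < n := by exact_mod_cast hn
      apply div_nonneg _ hnpos.le
      have : (1:ℝ) ≤ max (k n) 1 := le_max_right _ _
      exact Real.log_nonneg this
    · filter_upwards [hkx.eventually_lt_const (by linarith : x < x + 1),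
        eventually_ge_atTop 1] with n hub hn
      have hnpos : (0:ℝ) < n := by exact_mod_cast hn
      have hkn : k n < (x + 1) * n := by
        rw [div_lt_iff₀ hnpos] at hub; exact hub
      have hn1 : (1:ℝ) ≤ n := by exact_mod_cast hn
      have h1n : (1:ℝ) ≤ (x+1) * n := by nlinarith
      have hmaxle : max (k n) 1 ≤ (x+1)*n := max_le hkn.le h1n
      have hlogle : Real.log (max (k n) 1) ≤ Real.log (x+1) + Real.log n := by
        rw [← Real.log_mul (by positivity) hnpos.ne']
        exact Real.log_le_log (by positivity) hmaxle
      exact div_le_div_of_nonneg_right hlogle hnpos.le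
  have heq : ∀ n : ℕ, |Real.log (k n)| / n
      = Real.log (max (k n) 1) / n - Real.log (min (k n) 1) / n := by
    intro n
    rw [← sub_div]
    congr 1
    rcases le_total 1 (k n) with h | h
    · rw [max_eq_left h, min_eq_right h, Real.log_one, sub_zero,
        abs_of_nonneg (Real.log_nonneg h)]
    · rw [max_eq_right h, min_eq_left h, Real.log_one, zero_sub,
        abs_of_nonpos (Real.log_nonpos (hk n).le h)]
  have := hmax.sub hklog
  rw [sub_zero] at this
  exact Tendsto.congr (fun n => (heq n).symm) this

lemma auxKeyTendsto {x : ℝ} (hx : 0 ≤ x) {k : ℕ → ℝ} (hk : ∀ n, 0 < k n)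
    (hkx : Tendsto (fun n : ℕ => k n / n) atTop (nhds x))
    (hklog : Tendsto (fun n : ℕ => Real.log (min (k n) 1) / n) atTop (nhds 0))
    {c : ℝ} (hc : 0 < c) :
    ∃ g : ℕ → ℝ,
      Tendsto g atTop (nhds (x * Real.log c - x * Real.log x + x)) ∧
      ∀ n : ℕ, 1 ≤ n →
        (n : ℝ) * g n ≤ (k n - 1) * Real.log (n * c) - Real.log (Real.Gamma (k n)) := by
  refine ⟨fun n => (k n / n) * Real.log c - (k n / n) * Real.log (k n / n) + k n / n
      - (Real.log (n * c) + 2 + |Real.log (k n)|) / n, ?_, ?_⟩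
  · have h1 : Tendsto (fun n : ℕ => (k n / n) * Real.log c) atTop (nhds (x * Real.log c)) :=
      hkx.mul_const _
    have h2 : Tendsto (fun n : ℕ => (k n / n) * Real.log (k n / n)) atTop
        (nhds (x * Real.log x)) := by
      apply auxTendstoMulLog hx _ hkx
      filter_upwards [eventually_ge_atTop 1] with n hn
      have hnpos : (0:ℝ) < n := by exact_mod_cast hn
      exact div_pos (hk n) hnpos
    have h3 : Tendsto (fun n : ℕ => (Real.log (n * c) + 2 + |Real.log (k n)|) / n) atTop
        (nhds 0) := by
      have ha : Tendsto (fun n : ℕ => Real.log (n * c) / n) atTop (nhds 0) := by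
        have hlc : Tendsto (fun n : ℕ => Real.log c / n) atTop (nhds 0) :=
          tendsto_const_nhds.div_atTop tendsto_natCast_atTop_atTop
        have := auxLogDivTendsto.add hlc
        rw [add_zero] at this
        apply this.congr'
        filter_upwards [eventually_ge_atTop 1] with n hn
        have hnpos : (0:ℝ) < n := by exact_mod_cast hn
        rw [Real.log_mul hnpos.ne' hc.ne', add_div]
      have hb : Tendsto (fun n : ℕ => (2:ℝ) / n) atTop (nhds 0) :=
        tendsto_const_nhds.div_atTop tendsto_natCast_atTop_atTop
      have hc2 := auxAbsLogDivTendsto hx hk hkx hklog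
      have := (ha.add hb).add hc2
      simp only [add_zero] at this
      apply this.congr
      intro n
      rw [← add_div, ← add_div]
    have := (h1.sub h2).add hkx |>.sub h3
    simpa using this
  · intro n hn
    have hnpos : (0:ℝ) < n := by exact_mod_cast hn
    have hΓ := auxLogGammaBound (hk n)
    have hexp : (n:ℝ) * ((k n / n) * Real.log c - (k n / n) * Real.log (k n / n) + k n / n
        - (Real.log (n * c) + 2 + |Real.log (k n)|) / n)
        = k n * Real.log c - k n * Real.log (k n / n) + k n
        - (Real.log (n * c) + 2 + |Real.log (k n)|) := by
      field_simp
      try ring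
    rw [hexp, Real.log_div (hk n).ne' hnpos.ne']
    have hlognc : Real.log ((n:ℝ) * c) = Real.log n + Real.log c :=
      Real.log_mul hnpos.ne' hc.ne'
    rw [hlognc]
    linarith [hΓ]

lemma auxGammaMeasLB {k A B : ℝ} (hk : 0 < k) (hA : 0 < A) (hAB : A < B) :
    ENNReal.ofReal ((B - A) * (min (A ^ (k - 1)) (B ^ (k - 1)) * Real.exp (-B)
      / Real.Gamma k))
      ≤ gammaMeasure k 1 (Set.Ioo A B) := by
  have hΓ : 0 < Real.Gamma k := Real.Gamma_pos_of_pos hk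
  set C : ℝ := min (A ^ (k - 1)) (B ^ (k - 1)) * Real.exp (-B) / Real.Gamma k with hC
  have hCnn : 0 ≤ C :=
    div_nonneg (mul_nonneg (le_min (Real.rpow_pos_of_pos hA _).le
      (Real.rpow_pos_of_pos (hA.trans hAB) _).le) (Real.exp_pos _).le) hΓ.le
  rw [gammaMeasure, withDensity_apply _ measurableSet_Ioo]
  have hconst : ENNReal.ofReal ((B - A) * C) = ∫⁻ _x in Set.Ioo A B, ENNReal.ofReal C := by
    rw [setLIntegral_const, Real.volume_Ioo, ← ENNReal.ofReal_mul hCnn, mul_comm]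
  rw [hconst]
  apply setLIntegral_mono' measurableSet_Ioo
  intro t ht
  rw [gammaPDF_of_nonneg (le_of_lt (hA.trans ht.1))]
  apply ENNReal.ofReal_le_ofReal
  rw [Real.one_rpow]
  have hmin : min (A ^ (k - 1)) (B ^ (k - 1)) ≤ t ^ (k - 1) := by
    rcases le_or_gt 1 k with h | h
    · exact (min_le_left _ _).trans (Real.rpow_le_rpow hA.le ht.1.le (by linarith))
    · exact (min_le_right _ _).trans
        (Real.rpow_le_rpow_of_nonpos (hA.trans ht.1) ht.2.le (by linarith))
  have hexp : Real.exp (-B) ≤ Real.exp (-t) := Real.exp_le_exp.2 (by linarith [ht.2])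
  calc C ≤ t ^ (k - 1) * Real.exp (-t) / Real.Gamma k := by
        rw [hC]
        apply div_le_div_of_nonneg_right _ hΓ.le
        exact mul_le_mul hmin hexp (Real.exp_pos _).le (Real.rpow_pos_of_pos (hA.trans ht.1) _).le
    _ = 1 / Real.Gamma k * t ^ (k - 1) * Real.exp (-(1 * t)) := by rw [one_mul]; ring

lemma auxLogMin {X Y : ℝ} (hX : 0 < X) (hY : 0 < Y) :
    Real.log (min X Y) = min (Real.log X) (Real.log Y) := by
  rcases le_total X Y with h | h
  · rw [min_eq_left h, min_eq_left (Real.log_le_log hX h)]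
  · rw [min_eq_right h, min_eq_right (Real.log_le_log hY h)]

set_option maxHeartbeats 1600000 in
lemma auxMain {Ω : Type*} [MeasurableSpace Ω] (P : Measure Ω) [IsProbabilityMeasure P]
    {d : ℕ} (hd : 1 ≤ d) (x : Fin d → ℝ) (hx0 : ∀ i, 0 ≤ x i) (hx1 : (∑ i, x i) = 1)
    (kmat : Fin d → ℕ → ℝ) (hkpos : ∀ i n, 0 < kmat i n)
    (hklim : ∀ i, Tendsto (fun n : ℕ => kmat i n / n) atTop (nhds (x i)))
    (Z : ℕ → Fin d → Ω → ℝ) (hmeas : ∀ n i, Measurable (Z n i))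
    (hindep : ∀ n, iIndepFun (Z n) P)
    (hdist : ∀ n i, P.map (Z n i) = gammaMeasure (kmat i n) 1)
    (hlog : ∀ i, Tendsto (fun n : ℕ => Real.log (min (kmat i n) 1) / n) atTop (nhds 0))
    (G : Set (Fin d → ℝ))
    (y : Fin d → ℝ) (hy0 : ∀ i, 0 ≤ y i) (hy1 : (∑ i, y i) = 1)
    {δ : ℝ} (hδ : 0 < δ)
    (hsub : ∀ z : Fin d → ℝ, (∀ i, |z i - y i| < (2*(d:ℝ)+2)*δ) → z ∈ G) :
    ((∑ i, (x i * Real.log (y i + δ) - x i * Real.log (x i) + x i - (y i + 2*δ)) : ℝ) : EReal)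
      ≤ liminf (fun n : ℕ => (((n : ℝ)⁻¹ : ℝ) : EReal)
        * ENNReal.log (P {ω | (fun i => Z n i ω / ∑ j, Z n j ω) ∈ G})) atTop := by
  classical
  set a : Fin d → ℝ := fun i => y i + δ with ha
  set b : Fin d → ℝ := fun i => y i + 2*δ with hb
  have hapos : ∀ i, 0 < a i := fun i => by have := hy0 i; simp only [ha]; linarith
  have hbpos : ∀ i, 0 < b i := fun i => by have := hy0 i; simp only [hb]; linarith
  have hab : ∀ i, a i < b i := fun i => by simp only [ha, hb]; linarith
  have hy1le : ∀ i, y i ≤ 1 := by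
    intro i
    have := Finset.single_le_sum (f := y) (fun j _ => hy0 j) (Finset.mem_univ i)
    rw [hy1] at this; exact this
  have hsuma : ∑ j, a j = 1 + d * δ := by
    simp only [ha, Finset.sum_add_distrib, hy1, Finset.sum_const, Finset.card_univ,
      Fintype.card_fin, nsmul_eq_mul]
  have hsumb : ∑ j, b j = 1 + d * (2*δ) := by
    simp only [hb, Finset.sum_add_distrib, hy1, Finset.sum_const, Finset.card_univ,
      Fintype.card_fin, nsmul_eq_mul]
  -- per-coordinate tendsto data
  choose ga hga1 hga2 using fun i =>
    auxKeyTendsto (hx0 i) (hkpos i) (hklim i) (hlog i) (hapos i)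
  choose gb hgb1 hgb2 using fun i =>
    auxKeyTendsto (hx0 i) (hkpos i) (hklim i) (hlog i) (hbpos i)
  set r : Fin d → ℕ → ℝ := fun i n =>
    ((n:ℝ) * b i - (n:ℝ) * a i) * (min (((n:ℝ) * a i) ^ (kmat i n - 1))
      (((n:ℝ) * b i) ^ (kmat i n - 1)) * Real.exp (-((n:ℝ) * b i))
      / Real.Gamma (kmat i n)) with hr
  set v : Fin d → ℕ → ℝ := fun i n =>
    (n:ℝ)⁻¹ * Real.log ((n:ℝ) * δ) + min (ga i n) (gb i n) - b i with hv
  set V : ℕ → ℝ := fun n => ∑ i, v i n with hV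
  have hrpos : ∀ i (n : ℕ), 1 ≤ n → 0 < r i n := by
    intro i n hn
    have hnpos : (0:ℝ) < n := by exact_mod_cast hn
    have h1 : (0:ℝ) < (n:ℝ) * b i - (n:ℝ) * a i := by
      have := hab i; nlinarith
    have h2 : 0 < min (((n:ℝ) * a i) ^ (kmat i n - 1)) (((n:ℝ) * b i) ^ (kmat i n - 1)) :=
      lt_min (Real.rpow_pos_of_pos (mul_pos hnpos (hapos i)) _)
        (Real.rpow_pos_of_pos (mul_pos hnpos (hbpos i)) _)
    have h3 := Real.Gamma_pos_of_pos (hkpos i n)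
    positivity
  -- tendsto of V
  have hVC : Tendsto V atTop
      (nhds (∑ i, (x i * Real.log (y i + δ) - x i * Real.log (x i) + x i - (y i + 2*δ)))) := by
    apply tendsto_finset_sum
    intro i _
    have t1 : Tendsto (fun n : ℕ => (n:ℝ)⁻¹ * Real.log ((n:ℝ) * δ)) atTop (nhds 0) := by
      have hlc : Tendsto (fun n : ℕ => Real.log δ / n) atTop (nhds 0) :=
        tendsto_const_nhds.div_atTop tendsto_natCast_atTop_atTop
      have := auxLogDivTendsto.add hlc
      rw [add_zero] at this
      apply this.congr'
      filter_upwards [eventually_ge_atTop 1] with n hn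
      have hnpos : (0:ℝ) < n := by exact_mod_cast hn
      rw [Real.log_mul hnpos.ne' hδ.ne', inv_mul_eq_div, add_div]
    have t2 : Tendsto (fun n => min (ga i n) (gb i n)) atTop
        (nhds (x i * Real.log (a i) - x i * Real.log (x i) + x i)) := by
      have := (hga1 i).min (hgb1 i)
      have hmineq : min (x i * Real.log (a i) - x i * Real.log (x i) + x i)
          (x i * Real.log (b i) - x i * Real.log (x i) + x i)
          = x i * Real.log (a i) - x i * Real.log (x i) + x i := by
        apply min_eq_left
        have hlog_ab : Real.log (a i) ≤ Real.log (b i) :=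
          Real.log_le_log (hapos i) (hab i).le
        nlinarith [mul_le_mul_of_nonneg_left hlog_ab (hx0 i)]
      rw [hmineq] at this
      exact this
    have := (t1.add t2).sub (tendsto_const_nhds (x := b i))
    simp only [zero_add] at this
    simpa only [ha, hb] using this
  -- eventual EReal inequality
  have hlb : ∀ᶠ n in atTop, ((V n : ℝ) : EReal)
      ≤ (((n : ℝ)⁻¹ : ℝ) : EReal)
        * ENNReal.log (P {ω | (fun i => Z n i ω / ∑ j, Z n j ω) ∈ G}) := by
    filter_upwards [eventually_ge_atTop 1] with n hn
    have hnpos : (0:ℝ) < n := by exact_mod_cast hn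
    have hn1 : (1:ℝ) ≤ n := by exact_mod_cast hn
    -- subset
    have hEsub : (⋂ i, Z n i ⁻¹' (Set.Ioo ((n:ℝ) * a i) ((n:ℝ) * b i)))
        ⊆ {ω | (fun i => Z n i ω / ∑ j, Z n j ω) ∈ G} := by
      intro ω hω
      simp only [Set.mem_iInter, Set.mem_preimage, Set.mem_Ioo] at hω
      have hSlb : (n:ℝ) * (1 + d * δ) < ∑ j, Z n j ω := by
        have hlt : ∑ j, (n:ℝ) * a j < ∑ j, Z n j ω := by
          apply Finset.sum_lt_sum_of_nonempty
          · exact Finset.univ_nonempty_iff.2 (Fin.pos_iff_nonempty.1 hd)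
          · exact fun j _ => (hω j).1
        calc (n:ℝ) * (1 + d * δ) = ∑ j, (n:ℝ) * a j := by
              rw [← Finset.mul_sum, hsuma]
          _ < ∑ j, Z n j ω := hlt
      have hSub : ∑ j, Z n j ω < (n:ℝ) * (1 + d * (2*δ)) := by
        have hlt : ∑ j, Z n j ω < ∑ j, (n:ℝ) * b j := by
          apply Finset.sum_lt_sum_of_nonempty
          · exact Finset.univ_nonempty_iff.2 (Fin.pos_iff_nonempty.1 hd)
          · exact fun j _ => (hω j).2
        calc ∑ j, Z n j ω < ∑ j, (n:ℝ) * b j := hlt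
          _ = (n:ℝ) * (1 + d * (2*δ)) := by rw [← Finset.mul_sum, hsumb]
      set S := ∑ j, Z n j ω with hS
      have hd1 : (1:ℝ) ≤ d := by exact_mod_cast hd
      have hSpos : 0 < S := by nlinarith
      apply hsub
      intro i
      have hZ1 := (hω i).1
      have hZ2 := (hω i).2
      rw [abs_sub_lt_iff]
      constructor
      · -- Z/S - y i < (2d+2) δ
        have h1 : Z n i ω / S < y i + (2*(d:ℝ)+2)*δ := by
          rw [div_lt_iff₀ hSpos]
          have hbi : (n:ℝ) * b i = (n:ℝ) * y i + (n:ℝ) * (2*δ) := by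
            simp only [hb]; ring
          have hcoef : 0 ≤ y i + (2*(d:ℝ)+2)*δ := by nlinarith [hy0 i]
          have key := mul_le_mul_of_nonneg_left hSlb.le hcoef
          have h₁ : 0 ≤ (n:ℝ) * y i * d * δ :=
            mul_nonneg (mul_nonneg (mul_nonneg hnpos.le (hy0 i)) (Nat.cast_nonneg d)) hδ.le
          have h₂ : 0 ≤ (d:ℝ) * (n:ℝ) * δ :=
            mul_nonneg (mul_nonneg (Nat.cast_nonneg d) hnpos.le) hδ.le
          have h₃ : 0 ≤ (d:ℝ) * (n:ℝ) * δ * δ := mul_nonneg h₂ hδ.le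
          nlinarith [key, hZ2, hbi, h₁, h₂, h₃]
        linarith
      · -- y i - Z/S < (2d+2) δ
        have h1 : y i - (2*(d:ℝ)+2)*δ < Z n i ω / S := by
          rw [lt_div_iff₀ hSpos]
          have hai : (n:ℝ) * a i = (n:ℝ) * y i + (n:ℝ) * δ := by
            simp only [ha]; ring
          rcases le_or_gt (y i - (2*(d:ℝ)+2)*δ) 0 with hc | hc
          · have : (y i - (2*(d:ℝ)+2)*δ) * S ≤ 0 := mul_nonpos_of_nonpos_of_nonneg hc hSpos.le
            nlinarith [hZ1, mul_pos hnpos (hapos i)]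
          · have key := mul_lt_mul_of_pos_left hSub hc
            have h₁ : 0 ≤ (d:ℝ) * δ * ((n:ℝ) * (1 - y i)) :=
              mul_nonneg (mul_nonneg (Nat.cast_nonneg d) hδ.le)
                (mul_nonneg hnpos.le (by linarith [hy1le i]))
            have h₂ : 0 ≤ (d:ℝ) * (n:ℝ) * δ * δ :=
              mul_nonneg (mul_nonneg (mul_nonneg (Nat.cast_nonneg d) hnpos.le) hδ.le) hδ.le
            have h₃ : 0 ≤ (d:ℝ) * ((d:ℝ) * (n:ℝ) * δ * δ) := mul_nonneg (Nat.cast_nonneg d) h₂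
            have hstep : (y i - (2*(d:ℝ)+2)*δ) * ((n:ℝ) * (1 + (d:ℝ)*(2*δ)))
                ≤ (n:ℝ) * y i + (n:ℝ) * δ := by linarith [h₁, h₂, h₃, mul_pos hnpos hδ]
            linarith [key, hstep, hZ1, hai]
        linarith
    -- measure bound
    have hPE : P (⋂ i, Z n i ⁻¹' (Set.Ioo ((n:ℝ) * a i) ((n:ℝ) * b i)))
        = ∏ i, gammaMeasure (kmat i n) 1 (Set.Ioo ((n:ℝ) * a i) ((n:ℝ) * b i)) := by
      rw [(hindep n).meas_iInter (fun i => ⟨Set.Ioo _ _, measurableSet_Ioo, rfl⟩)]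
      exact Finset.prod_congr rfl fun i _ => by
        rw [← hdist n i, Measure.map_apply (hmeas n i) measurableSet_Ioo]
    have hge : ENNReal.ofReal (∏ i, r i n)
        ≤ P {ω | (fun i => Z n i ω / ∑ j, Z n j ω) ∈ G} := by
      calc ENNReal.ofReal (∏ i, r i n) = ∏ i, ENNReal.ofReal (r i n) :=
            ENNReal.ofReal_prod_of_nonneg (fun i _ => (hrpos i n hn).le)
        _ ≤ ∏ i, gammaMeasure (kmat i n) 1 (Set.Ioo ((n:ℝ) * a i) ((n:ℝ) * b i)) := by
            apply Finset.prod_le_prod' 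
            intro i _
            exact auxGammaMeasLB (hkpos i n) (mul_pos hnpos (hapos i)) (mul_lt_mul_of_pos_left (hab i) hnpos)
        _ = P (⋂ i, Z n i ⁻¹' (Set.Ioo ((n:ℝ) * a i) ((n:ℝ) * b i))) := hPE.symm
        _ ≤ P {ω | (fun i => Z n i ω / ∑ j, Z n j ω) ∈ G} := measure_mono hEsub
    have hprodpos : 0 < ∏ i, r i n := Finset.prod_pos (fun i _ => hrpos i n hn)
    -- real inequality V n ≤ n⁻¹ log ∏ r
    have hVle : V n ≤ (n:ℝ)⁻¹ * Real.log (∏ i, r i n) := by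
      rw [Real.log_prod (fun i _ => (hrpos i n hn).ne'), Finset.mul_sum]
      apply Finset.sum_le_sum
      intro i _
      -- v i n ≤ n⁻¹ * log (r i n)
      have hnv : (n:ℝ) * v i n ≤ Real.log (r i n) := by
        have hmin2 : min (((n:ℝ) * a i) ^ (kmat i n - 1)) (((n:ℝ) * b i) ^ (kmat i n - 1))
            > 0 := lt_min (Real.rpow_pos_of_pos (mul_pos hnpos (hapos i)) _)
              (Real.rpow_pos_of_pos (mul_pos hnpos (hbpos i)) _)
        have hΓpos := Real.Gamma_pos_of_pos (hkpos i n)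
        have hdiff : (0:ℝ) < (n:ℝ) * b i - (n:ℝ) * a i := by
          have := mul_lt_mul_of_pos_left (hab i) hnpos; linarith
        have hlogr : Real.log (r i n) = Real.log ((n:ℝ) * b i - (n:ℝ) * a i)
            + (min ((kmat i n - 1) * Real.log ((n:ℝ) * a i))
                ((kmat i n - 1) * Real.log ((n:ℝ) * b i))
              - ((n:ℝ) * b i) - Real.log (Real.Gamma (kmat i n))) := by
          rw [hr]
          rw [Real.log_mul hdiff.ne'
            (div_pos (mul_pos hmin2 (Real.exp_pos _)) hΓpos).ne']
          rw [Real.log_div (mul_pos hmin2 (Real.exp_pos _)).ne' hΓpos.ne']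
          rw [Real.log_mul hmin2.ne' (Real.exp_pos _).ne']
          rw [Real.log_exp]
          rw [auxLogMin (Real.rpow_pos_of_pos (mul_pos hnpos (hapos i)) _)
            (Real.rpow_pos_of_pos (mul_pos hnpos (hbpos i)) _)]
          rw [Real.log_rpow (mul_pos hnpos (hapos i)),
            Real.log_rpow (mul_pos hnpos (hbpos i))]
          ring
        have hdiffeq : (n:ℝ) * b i - (n:ℝ) * a i = (n:ℝ) * δ := by
          simp only [ha, hb]; ring
        have hminle : (n:ℝ) * min (ga i n) (gb i n)
            ≤ min ((kmat i n - 1) * Real.log ((n:ℝ) * a i))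
                ((kmat i n - 1) * Real.log ((n:ℝ) * b i))
              - Real.log (Real.Gamma (kmat i n)) := by
          have e1 := hga2 i n hn
          have e2 := hgb2 i n hn
          have : (n:ℝ) * min (ga i n) (gb i n) = min ((n:ℝ) * ga i n) ((n:ℝ) * gb i n) :=
            (mul_min_of_nonneg _ _ hnpos.le)
          rw [this, ← min_sub_sub_right]
          exact min_le_min e1 e2
        rw [hlogr, hdiffeq]
        have hnv2 : (n:ℝ) * v i n = Real.log ((n:ℝ) * δ)
            + (n:ℝ) * min (ga i n) (gb i n) - (n:ℝ) * b i := by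
          rw [hv]
          field_simp
        rw [hnv2]
        linarith
      have := mul_le_mul_of_nonneg_left hnv (inv_nonneg.2 hnpos.le)
      rw [← mul_assoc, inv_mul_cancel₀ hnpos.ne', one_mul] at this
      exact this
    -- put into EReal
    calc ((V n : ℝ) : EReal) ≤ (((n:ℝ)⁻¹ * Real.log (∏ i, r i n) : ℝ) : EReal) := by
          exact_mod_cast hVle
      _ = (((n:ℝ)⁻¹ : ℝ) : EReal) * ((Real.log (∏ i, r i n) : ℝ) : EReal) := by
          rw [← EReal.coe_mul]
      _ = (((n:ℝ)⁻¹ : ℝ) : EReal) * ENNReal.log (ENNReal.ofReal (∏ i, r i n)) := by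
          rw [ENNReal.log_ofReal_of_pos hprodpos]
      _ ≤ (((n:ℝ)⁻¹ : ℝ) : EReal)
            * ENNReal.log (P {ω | (fun i => Z n i ω / ∑ j, Z n j ω) ∈ G}) := by
          apply mul_le_mul_of_nonneg_left (ENNReal.log_monotone hge)
          exact_mod_cast inv_nonneg.2 hnpos.le
  -- conclude via liminf
  have h1 : Tendsto (fun n => ((V n : ℝ) : EReal)) atTop
      (nhds ((∑ i, (x i * Real.log (y i + δ) - x i * Real.log (x i) + x i - (y i + 2*δ)) : ℝ)
        : EReal)) := by
    exact (EReal.tendsto_coe).2 hVC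
  calc ((∑ i, (x i * Real.log (y i + δ) - x i * Real.log (x i) + x i - (y i + 2*δ)) : ℝ) : EReal)
      = liminf (fun n => ((V n : ℝ) : EReal)) atTop := (h1.liminf_eq).symm
    _ ≤ liminf (fun n : ℕ => (((n : ℝ)⁻¹ : ℝ) : EReal)
        * ENNReal.log (P {ω | (fun i => Z n i ω / ∑ j, Z n j ω) ∈ G})) atTop :=
        liminf_le_liminf hlb

lemma auxERealLe {L : EReal} {t : ℝ} (h : ∀ e : ℝ, 0 < e → ((t - e : ℝ) : EReal) ≤ L) :
    (t : EReal) ≤ L := by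
  by_contra hc
  push_neg at hc
  have hbot : ((t - 1 : ℝ) : EReal) ≤ L := h 1 one_pos
  have hLtop : L ≠ ⊤ := fun hT => by rw [hT] at hc; exact (not_top_lt hc)
  have hLbot : L ≠ ⊥ := fun hB => by
    rw [hB] at hbot
    exact (EReal.coe_ne_bot _) (le_bot_iff.1 hbot)
  lift L to ℝ using ⟨hLtop, hLbot⟩
  rw [EReal.coe_lt_coe_iff] at hc
  have h2 : t - (t - L) / 2 ≤ L := by
    have := h ((t - L) / 2) (by linarith)
    exact_mod_cast this
  linarith


end auxLDP

/-- **LDP lower bound for the Dirichlet distribution.** If, for each `n`, the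
`Z n i ∼ Gamma(k_{i,n}, 1)` are independent with `k_{i,n}/n → x i` for a
probability vector `x` and `log(min(k_{i,n},1))/n → 0` for every `i`, and
`Y n = (Z n i / Σ_j Z n j)_i` is the corresponding Dirichlet random vector,
then for every open `G ⊆ ℝ^d`,
`liminf (1/n)·log P(Y n ∈ G) ≥ −inf_{y ∈ G} I(y)`. -/
theorem stmt16 {Ω : Type*} [MeasurableSpace Ω] (P : Measure Ω) [IsProbabilityMeasure P]
    {d : ℕ} (hd : 1 ≤ d) (x : Fin d → ℝ) (hx0 : ∀ i, 0 ≤ x i) (hx1 : (∑ i, x i) = 1)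
    (kmat : Fin d → ℕ → ℝ) (hkpos : ∀ i n, 0 < kmat i n)
    (hklim : ∀ i, Tendsto (fun n : ℕ => kmat i n / n) atTop (nhds (x i)))
    (Z : ℕ → Fin d → Ω → ℝ) (hmeas : ∀ n i, Measurable (Z n i))
    (hindep : ∀ n, iIndepFun (Z n) P)
    (hdist : ∀ n i, P.map (Z n i) = gammaMeasure (kmat i n) 1)
    (hlog : ∀ i, Tendsto (fun n : ℕ => Real.log (min (kmat i n) 1) / n) atTop (nhds 0))
    (G : Set (Fin d → ℝ)) (hG : IsOpen G) :
    -(((⨅ y ∈ G, dirRate x y) : ℝ≥0∞) : EReal)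
      ≤ liminf (fun n : ℕ => (((n : ℝ)⁻¹ : ℝ) : EReal)
        * ENNReal.log (P {ω | (fun i => Z n i ω / ∑ j, Z n j ω) ∈ G})) atTop := by
  classical
  set L := liminf (fun n : ℕ => (((n : ℝ)⁻¹ : ℝ) : EReal)
    * ENNReal.log (P {ω | (fun i => Z n i ω / ∑ j, Z n j ω) ∈ G})) atTop with hLdef
  have hd1 : (1:ℝ) ≤ (d:ℝ) := by exact_mod_cast hd
  -- per-y bound
  have key : ∀ y ∈ G, -((dirRate x y : ℝ≥0∞) : EReal) ≤ L := by
    intro y hyG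
    by_cases hy : (∀ i, 0 ≤ y i) ∧ (∑ i, y i) = 1
    swap
    · rw [dirRate, if_neg hy]
      simp only [EReal.coe_ennreal_top]
      simp
    obtain ⟨hy0, hy1⟩ := hy
    rw [dirRate, if_pos ⟨hy0, hy1⟩, klVec]
    by_cases hpos : ∀ i, 0 < x i → 0 < y i
    swap
    · rw [if_neg hpos]
      simp only [EReal.coe_ennreal_top]
      simp
    rw [if_pos hpos]
    set KL : ℝ := ∑ i, if 0 < x i then x i * Real.log (x i / y i) else 0 with hKL
    have h1 : -((ENNReal.ofReal KL : ℝ≥0∞) : EReal) ≤ ((-KL : ℝ) : EReal) := by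
      rw [EReal.coe_ennreal_ofReal]
      have : ((-KL : ℝ) : EReal) = -((KL : ℝ) : EReal) := by
        rw [EReal.coe_neg]
      rw [this]
      rw [EReal.neg_le_neg_iff]
      exact_mod_cast le_max_left KL 0
    refine le_trans h1 ?_
    apply auxERealLe
    intro e he
    obtain ⟨ε, hε, hball⟩ := Metric.isOpen_iff.1 hG y hyG
    set δ : ℝ := min (ε / (2*(d:ℝ)+4)) (e / (2*(d:ℝ))) with hδdef
    have hδpos : 0 < δ := lt_min (by positivity) (by positivity)
    have hsub : ∀ z : Fin d → ℝ, (∀ i, |z i - y i| < (2*(d:ℝ)+2)*δ) → z ∈ G := by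
      intro z hz
      apply hball
      rw [Metric.mem_ball]
      rw [dist_pi_lt_iff hε]
      intro i
      rw [Real.dist_eq]
      calc |z i - y i| < (2*(d:ℝ)+2)*δ := hz i
        _ ≤ (2*(d:ℝ)+2) * (ε / (2*(d:ℝ)+4)) :=
            mul_le_mul_of_nonneg_left (min_le_left _ _) (by positivity)
        _ < ε := by
            rw [mul_div_assoc', div_lt_iff₀ (by positivity)]
            nlinarith
    have hmain := auxMain P hd x hx0 hx1 kmat hkpos hklim Z hmeas hindep hdist hlog G
      y hy0 hy1 hδpos hsub
    refine le_trans ?_ hmain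
    rw [EReal.coe_le_coe_iff]
    -- real inequality
    have hS1 : ∑ i, (x i * Real.log (y i + δ) - x i * Real.log (x i) + x i - (y i + 2*δ))
        = (∑ i, (x i * Real.log (y i + δ) - x i * Real.log (x i))) + (∑ i, x i)
          - (∑ i, (y i + 2*δ)) := by
      rw [← Finset.sum_add_distrib, ← Finset.sum_sub_distrib]
    have hS2 : ∑ i, (y i + 2*δ) = 1 + (d:ℝ) * (2*δ) := by
      simp only [Finset.sum_add_distrib, hy1, Finset.sum_const, Finset.card_univ,
        Fintype.card_fin, nsmul_eq_mul]
    have hterm : ∀ i, -(if 0 < x i then x i * Real.log (x i / y i) else 0)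
        ≤ x i * Real.log (y i + δ) - x i * Real.log (x i) := by
      intro i
      by_cases hxi : 0 < x i
      · rw [if_pos hxi]
        have hyi := hpos i hxi
        rw [Real.log_div hxi.ne' hyi.ne']
        have hlogy : Real.log (y i) ≤ Real.log (y i + δ) :=
          Real.log_le_log hyi (by linarith)
        have := mul_le_mul_of_nonneg_left hlogy (hx0 i)
        nlinarith
      · rw [if_neg hxi]
        have hx0i : x i = 0 := le_antisymm (not_lt.1 hxi) (hx0 i)
        simp [hx0i]
    have hS3 : -KL ≤ ∑ i, (x i * Real.log (y i + δ) - x i * Real.log (x i)) := by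
      rw [hKL, ← Finset.sum_neg_distrib]
      exact Finset.sum_le_sum (fun i _ => hterm i)
    have h2dδ : (d:ℝ) * (2*δ) ≤ e := by
      have hmin : δ ≤ e / (2*(d:ℝ)) := min_le_right _ _
      have hdpos : (0:ℝ) < d := by linarith
      rw [div_eq_mul_inv] at hmin
      have := mul_le_mul_of_nonneg_left hmin (by positivity : (0:ℝ) ≤ (d:ℝ) * 2)
      calc (d:ℝ) * (2*δ) = (d:ℝ) * 2 * δ := by ring
        _ ≤ (d:ℝ) * 2 * (e * (2*(d:ℝ))⁻¹) := this
        _ = e := by field_simp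
    rw [hS1, hS2, hx1]
    linarith
  -- outer reduction over the infimum
  set I0 : ℝ≥0∞ := ⨅ y ∈ G, dirRate x y with hI0
  rcases eq_or_ne I0 ⊤ with hT | hT
  · rw [hT]
    simp only [EReal.coe_ennreal_top]
    simp
  · have hcoene : ((I0 : ℝ≥0∞) : EReal) ≠ ⊤ := by
      simpa using hT
    have hcoebot : ((I0 : ℝ≥0∞) : EReal) ≠ ⊥ := by
      simp
    have hrepr : ((I0 : ℝ≥0∞) : EReal)
        = ((I0.toReal : ℝ) : EReal) := by
      rw [← EReal.toReal_coe_ennreal, EReal.coe_toReal hcoene hcoebot]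
    rw [hrepr, ← EReal.coe_neg]
    apply auxERealLe
    intro e he
    have hlt : (⨅ y ∈ G, dirRate x y) < I0 + ENNReal.ofReal e :=
      ENNReal.lt_add_right hT (ENNReal.ofReal_pos.2 he).ne'
    have hex : ∃ y, y ∈ G ∧ dirRate x y < I0 + ENNReal.ofReal e := by
      simp only [iInf_lt_iff] at hlt
      obtain ⟨y, hyG, hy2⟩ := hlt
      exact ⟨y, hyG, hy2⟩
    obtain ⟨y, hyG, hylt⟩ := hex
    have hsum_ne : I0 + ENNReal.ofReal e ≠ ⊤ :=
      ENNReal.add_ne_top.2 ⟨hT, ENNReal.ofReal_ne_top⟩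
    have hle2 : ((dirRate x y : ℝ≥0∞) : EReal)
        ≤ ((I0.toReal + e : ℝ) : EReal) := by
      have hc1 : ((dirRate x y : ℝ≥0∞) : EReal)
          ≤ ((I0 + ENNReal.ofReal e : ℝ≥0∞) : EReal) :=
        EReal.coe_ennreal_le_coe_ennreal_iff.2 hylt.le
      have hc2 : ((I0 + ENNReal.ofReal e : ℝ≥0∞) : EReal)
          = ((I0.toReal + e : ℝ) : EReal) := by
        rw [show I0.toReal + e = (I0 + ENNReal.ofReal e).toReal by
          rw [ENNReal.toReal_add hT ENNReal.ofReal_ne_top, ENNReal.toReal_ofReal he.le]]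
        rw [← EReal.toReal_coe_ennreal (x := I0 + ENNReal.ofReal e)]
        rw [EReal.coe_toReal (fun H => hsum_ne (EReal.coe_ennreal_eq_top_iff.1 H))
          (EReal.coe_ennreal_ne_bot _)]
      rw [← hc2]
      exact hc1
    have hneg : ((-I0.toReal - e : ℝ) : EReal)
        ≤ -((dirRate x y : ℝ≥0∞) : EReal) := by
      have : ((-I0.toReal - e : ℝ) : EReal)
          = -(((I0.toReal + e : ℝ)) : EReal) := by
        rw [← EReal.coe_neg]
        exact EReal.coe_eq_coe_iff.2 (by ring)
      rw [this, EReal.neg_le_neg_iff]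
      exact hle2
    exact hneg.trans (key y hyG)
end

section
/- Let d ≥ 1 and let x = (x_1,…,x_d) be a probability vector. For each i define f_i : ℝ → [0,∞] by f_i(t) = ∞ if t < 0 or (t = 0 and x_i > 0), f_i(t) = 0 if t = 0 = x_i, and f_i(t) = t − x_i + x_i·log(x_i/t) if t > 0 (with x_i·log(x_i/t) = 0 when x_i = 0). For y ∈ ℝ^d define I(y) = inf{ Σ_{i=1}^d f_i(z_i) : z ∈ ℝ^d with Σ_j z_j ≠ 0 and z_i/Σ_j z_j = y_i for all i }, with inf ∅ = ∞. Then I(y) = KL(x‖y) if y is a probability vector on {1,…,d}, and I(y) = ∞ otherwise. -/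
open scoped ENNReal NNReal Classical

/-- `f_i(t)`: `∞` if `t < 0` or (`t = 0` and `x_i > 0`), `0` if `t = 0 = x_i`,
and `t − x_i + x_i·log(x_i/t)` if `t > 0` (with `x_i·log(x_i/t) = 0` when
`x_i = 0`). -/
noncomputable def fRate (xi t : ℝ) : ℝ≥0∞ :=
  if t < 0 ∨ (t = 0 ∧ 0 < xi) then ⊤
  else if t = 0 then 0
  else ENNReal.ofReal (t - xi + xi * Real.log (xi / t))

lemma fRate_ne_top_aux (xi t : ℝ) (hxi : 0 ≤ xi) (h : fRate xi t ≠ ⊤) :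
    0 ≤ t ∧ (t = 0 → xi = 0) := by
  unfold fRate at h
  by_cases hc : t < 0 ∨ (t = 0 ∧ 0 < xi)
  · rw [if_pos hc] at h; exact absurd rfl h
  · push_neg at hc
    exact ⟨hc.1, fun ht => le_antisymm (hc.2 ht) hxi⟩

lemma fRate_eq (xi t : ℝ) (ht : 0 ≤ t) (h0 : t = 0 → xi = 0) :
    fRate xi t = ENNReal.ofReal (t - xi + xi * Real.log (xi / t)) := by
  unfold fRate
  have h1 : ¬ (t < 0 ∨ (t = 0 ∧ 0 < xi)) := by
    rintro (h' | ⟨h', h''⟩)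
    · exact absurd ht (not_le.2 h')
    · rw [h0 h'] at h''; exact lt_irrefl 0 h''
  rw [if_neg h1]
  rcases eq_or_lt_of_le ht with h | h
  · simp [← h, h0 h.symm]
  · rw [if_neg h.ne']

lemma expr_nonneg (xi t : ℝ) (hx : 0 ≤ xi) (ht : 0 ≤ t) (h0 : t = 0 → xi = 0) :
    0 ≤ t - xi + xi * Real.log (xi / t) := by
  rcases eq_or_lt_of_le ht with h | h
  · simp [← h, h0 h.symm]
  rcases eq_or_lt_of_le hx with h' | h'
  · simp [← h']; linarith
  · have hq : 0 < t / xi := div_pos h h'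
    have hlog := Real.log_le_sub_one_of_pos hq
    have hl2 : Real.log (xi / t) = - Real.log (t / xi) := by
      rw [← Real.log_inv]; congr 1; field_simp
    have ht' : xi * (t / xi) = t := by field_simp
    rw [hl2]
    nlinarith [mul_le_mul_of_nonneg_left hlog h'.le]

lemma sum_fRate {d : ℕ} (x z : Fin d → ℝ) (hx : ∀ i, 0 ≤ x i) (hz : ∀ i, 0 ≤ z i)
    (h0 : ∀ i, z i = 0 → x i = 0) :
    ∑ i, fRate (x i) (z i)
      = ENNReal.ofReal (∑ i, (z i - x i + x i * Real.log (x i / z i))) := by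
  rw [ENNReal.ofReal_sum_of_nonneg (fun i _ => expr_nonneg _ _ (hx i) (hz i) (h0 i))]
  exact Finset.sum_congr rfl fun i _ => fRate_eq _ _ (hz i) (h0 i)

lemma sum_expr {d : ℕ} (x z : Fin d → ℝ) (hx0 : ∀ i, 0 ≤ x i) (hx1 : ∑ i, x i = 1)
    (hs : 0 < ∑ j, z j) (hzx : ∀ i, 0 < x i → 0 < z i) :
    ∑ i, (z i - x i + x i * Real.log (x i / z i))
      = (∑ j, z j) - 1 - Real.log (∑ j, z j)
        + ∑ i, (if 0 < x i then x i * Real.log (x i / (z i / ∑ j, z j)) else 0) := by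
  set s := ∑ j, z j with hsdef
  have key : ∀ i, x i * Real.log (x i / z i)
      = (if 0 < x i then x i * Real.log (x i / (z i / s)) else 0) - x i * Real.log s := by
    intro i
    rcases eq_or_lt_of_le (hx0 i) with h | h
    · simp [← h]
    · have hzi := hzx i h
      rw [if_pos h]
      have h1 : x i / (z i / s) = (x i / z i) * s := by
        field_simp
      rw [h1, Real.log_mul (div_pos h hzi).ne' hs.ne']
      ring
  have step : ∑ i, (z i - x i + x i * Real.log (x i / z i))
      = ∑ i, (z i - x i + ((if 0 < x i then x i * Real.log (x i / (z i / s)) else 0)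
          - x i * Real.log s)) :=
    Finset.sum_congr rfl fun i _ => by rw [key i]
  rw [step]
  rw [Finset.sum_add_distrib, Finset.sum_sub_distrib, Finset.sum_sub_distrib,
    ← Finset.sum_mul, hx1, ← hsdef]
  ring


/-- **Contraction of the Gamma rate functions gives the KL divergence.** For a
probability vector `x` and any `y ∈ ℝ^d`, the infimum
`I(y) = inf { Σ_i f_i(z_i) : Σ_j z_j ≠ 0, z_i/Σ_j z_j = y_i ∀ i }` (with
`inf ∅ = ∞`) equals `KL(x‖y)` if `y` is a probability vector, and `∞`
otherwise. -/
theorem stmt18 {d : ℕ} (hd : 1 ≤ d) (x : Fin d → ℝ) (hx0 : ∀ i, 0 ≤ x i)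
    (hx1 : (∑ i, x i) = 1) (y : Fin d → ℝ) :
    (((∀ i, 0 ≤ y i) ∧ (∑ i, y i) = 1) →
      (⨅ (z : Fin d → ℝ) (_ : (∑ j, z j) ≠ 0 ∧ ∀ i, z i / (∑ j, z j) = y i),
          ∑ i, fRate (x i) (z i)) = klVec x y) ∧
    (¬ ((∀ i, 0 ≤ y i) ∧ (∑ i, y i) = 1) →
      (⨅ (z : Fin d → ℝ) (_ : (∑ j, z j) ≠ 0 ∧ ∀ i, z i / (∑ j, z j) = y i),
          ∑ i, fRate (x i) (z i)) = ⊤) := by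
  constructor
  · intro hy
    by_cases hxy : ∀ i, 0 < x i → 0 < y i
    · -- kl finite case
      rw [klVec, if_pos hxy]
      set K : ℝ := ∑ i, if 0 < x i then x i * Real.log (x i / y i) else 0 with hK
      have hy0 : ∀ i, y i = 0 → x i = 0 := by
        intro i h
        by_contra hxne
        have := hxy i ((hx0 i).lt_of_ne (Ne.symm hxne))
        rw [h] at this; exact lt_irrefl 0 this
      apply le_antisymm
      · -- upper bound: evaluate at z = y
        have hfeas : (∑ j, y j) ≠ 0 ∧ ∀ i, y i / (∑ j, y j) = y i := by
          refine ⟨by rw [hy.2]; exact one_ne_zero, fun i => by rw [hy.2, div_one]⟩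
        refine le_trans (iInf₂_le y hfeas) ?_
        rw [sum_fRate x y hx0 hy.1 hy0, sum_expr x y hx0 hx1 (by rw [hy.2]; norm_num) hxy]
        apply le_of_eq
        congr 1
        rw [hy.2]
        simp [Real.log_one]
        exact hK.symm
      · -- lower bound
        refine le_iInf₂ fun z hz => ?_
        by_cases htop : ∃ i, fRate (x i) (z i) = ⊤
        · obtain ⟨i, hi⟩ := htop
          rw [ENNReal.sum_eq_top.2 ⟨i, Finset.mem_univ i, hi⟩]
          exact le_top
        · push_neg at htop
          have hzp : ∀ i, 0 ≤ z i := fun i => (fRate_ne_top_aux _ _ (hx0 i) (htop i)).1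
          have hz0 : ∀ i, z i = 0 → x i = 0 :=
            fun i => (fRate_ne_top_aux _ _ (hx0 i) (htop i)).2
          have hs : 0 < ∑ j, z j :=
            (Finset.sum_nonneg fun i _ => hzp i).lt_of_ne (Ne.symm hz.1)
          have hzx : ∀ i, 0 < x i → 0 < z i := by
            intro i hxi
            rcases eq_or_lt_of_le (hzp i) with h | h
            · rw [hz0 i h.symm] at hxi; exact absurd hxi (lt_irrefl 0)
            · exact h
          rw [sum_fRate x z hx0 hzp hz0, sum_expr x z hx0 hx1 hs hzx]
          simp only [hz.2]
          apply ENNReal.ofReal_le_ofReal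
          have := Real.log_le_sub_one_of_pos hs
          linarith
    · -- kl = ⊤ case
      rw [klVec, if_neg hxy]
      rw [iInf_eq_top]
      intro z
      rw [iInf_eq_top]
      intro hz
      push_neg at hxy
      obtain ⟨i, hxi, hyi⟩ := hxy
      have hyi0 : y i = 0 := le_antisymm hyi (hy.1 i)
      have hzi : z i = 0 := by
        have := hz.2 i
        rw [hyi0] at this
        rcases div_eq_zero_iff.1 this with h | h
        · exact h
        · exact absurd h hz.1
      have hfi : fRate (x i) (z i) = ⊤ := by
        rw [hzi]; unfold fRate; rw [if_pos (Or.inr ⟨rfl, hxi⟩)]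
      exact ENNReal.sum_eq_top.2 ⟨i, Finset.mem_univ i, hfi⟩
  · intro hny
    rw [iInf_eq_top]
    intro z
    rw [iInf_eq_top]
    intro hz
    by_contra h
    have htop : ∀ i, fRate (x i) (z i) ≠ ⊤ := by
      intro i hi
      exact h (ENNReal.sum_eq_top.2 ⟨i, Finset.mem_univ i, hi⟩)
    have hzp : ∀ i, 0 ≤ z i := fun i => (fRate_ne_top_aux _ _ (hx0 i) (htop i)).1
    have hs : 0 < ∑ j, z j :=
      (Finset.sum_nonneg fun i _ => hzp i).lt_of_ne (Ne.symm hz.1)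
    refine hny ⟨fun i => ?_, ?_⟩
    · rw [← hz.2 i]; exact div_nonneg (hzp i) hs.le
    · have : ∑ i, y i = ∑ i, z i / (∑ j, z j) :=
        Finset.sum_congr rfl fun i _ => (hz.2 i).symm
      rw [this, ← Finset.sum_div, div_self hz.1]
end
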